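/- arXiv:2510.03940 — 4 statements merged into one kernel-verified Lean document; each statement's English description precedes it below -/
import Mathlib

section
/- Let b ≥ 3 be an integer and let q(x) = Σ_{j=0}^{b-2} (b-1-j)·x^j ∈ ℂ[x] (so q(x) = x^{b-2} + 2x^{b-3} + ... + (b-1)). Then every complex root z of q satisfies |z| > 1. -/
open Polynomial Finset

/-! A root `z` of `q` is not `1`, and `(z - 1) q(z) = z + z² + ⋯ + z^(b-1) - (b - 1)`. So for `‖z‖ ≤ 1`,
`b - 1` complex numbers of norm at most `1` would sum to `b - 1`, forcing all of them, in particular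
`z` itself, to equal `1`. -/

theorem sub_one_mul_sum_range_sub_mul_pow {R : Type*} [CommRing R] (n : ℕ) (z : R) :
    (z - 1) * ∑ j ∈ range n, ((n : R) - j) * z ^ j = ∑ k ∈ range n, z ^ (k + 1) - n := by
  induction n with
  | zero => simp
  | succ n ih =>
    have hsucc : ∑ j ∈ range (n + 1), ((↑(n + 1) : R) - j) * z ^ j
        = z * ∑ j ∈ range n, ((n : R) - j) * z ^ j + (n + 1) := by
      rw [sum_range_succ', mul_sum]
      refine congrArg₂ _ (sum_congr rfl fun j _ => ?_) (by simp)
      push_cast; ring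
    rw [hsucc, mul_add, mul_left_comm, ih, sum_range_succ' _ n]
    simp only [pow_succ, ← sum_mul]
    push_cast; ring

theorem Complex.eq_one_of_norm_le_one_of_re_eq_one {w : ℂ} (hw : ‖w‖ ≤ 1) (hre : w.re = 1) :
    w = 1 := by
  have him : w.im = 0 := Complex.abs_re_eq_norm.1 <|
    le_antisymm (Complex.abs_re_le_norm w) (by rw [hre, abs_one]; exact hw)
  exact Complex.ext hre him

theorem Complex.eq_one_of_norm_le_one_of_sum_eq_card {ι : Type*} {s : Finset ι} {f : ι → ℂ}
    (hf : ∀ i ∈ s, ‖f i‖ ≤ 1) (hs : ∑ i ∈ s, f i = #s) : ∀ i ∈ s, f i = 1 := by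
  have hre : ∀ i ∈ s, (f i).re ≤ 1 := fun i hi => (Complex.re_le_norm _).trans (hf i hi)
  have hsum : ∑ i ∈ s, (f i).re = ∑ i ∈ s, (1 : ℝ) := by
    simpa [Complex.re_sum] using congrArg Complex.re hs
  exact fun i hi =>
    eq_one_of_norm_le_one_of_re_eq_one (hf i hi) ((sum_eq_sum_iff_of_le hre).1 hsum i hi)

theorem stmt_4 (b : ℕ) (hb : 3 ≤ b) (z : ℂ)
    (hz : IsRoot (∑ j ∈ Finset.range (b - 1), C ((b : ℂ) - 1 - j) * X ^ j) z) :
    1 < ‖z‖ := by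
  obtain ⟨n, rfl⟩ : ∃ n, b = n + 1 := ⟨b - 1, by omega⟩
  have hroot : ∑ j ∈ range n, ((n : ℂ) - j) * z ^ j = 0 := by
    simpa [eval_finsetSum] using hz
  have hpow : ∑ k ∈ range n, z ^ (k + 1) = #(range n) := by
    rw [card_range, ← sub_eq_zero, ← sub_one_mul_sum_range_sub_mul_pow, hroot, mul_zero]
  by_contra! hle
  have hz1 : z = 1 := by
    simpa using Complex.eq_one_of_norm_le_one_of_sum_eq_card
      (fun k _ => by rw [norm_pow]; exact pow_le_one₀ (norm_nonneg z) hle) hpow 0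
      (mem_range.2 (by omega))
  have hpos : 0 < ∑ j ∈ range n, ((n : ℝ) - j) :=
    sum_pos (fun j hj => by simpa using mem_range.1 hj) (nonempty_range_iff.2 (by omega))
  have hre := congrArg Complex.re hroot
  simp only [hz1, one_pow, mul_one, Complex.re_sum, Complex.sub_re, Complex.natCast_re,
    Complex.zero_re] at hre
  exact hpos.ne' hre
end

section
/- Let b ≥ 2 be an integer and define q : ℕ → ℚ by q(0) = 1 and, for n ≥ 1, q(n) = (1/(b-1)) · Σ_{d=1}^{min(n, b-1)} q(n-d). Then lim_{n→∞} q(n) = 2/b. -/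
/-!
Write `m = b - 1`. Preceded by `m - 1` zeros, `q` becomes a sequence `x` with
`m * x (n + m) = x n + ⋯ + x (n + m - 1)` for all `n`: every term is the average of the `m` terms
before it. Such a recurrence preserves the weighted window sum `∑ j < m, (j + 1) * x (n + j)`, and
for the errors `x - 2 / b` this sum vanishes on the first window, because `q 0 = 1` has weight `m`
and `∑ j < m, (j + 1) = m * b / 2`. Hence every window of errors has terms of both signs, so the
next error, their average, is at most `(m - 1) / m` times the largest of them in absolute value,
and the errors decay geometrically along blocks of length `m`.
-/

open Finset Filter Topology

theorem Finset.abs_sum_le_of_sum_mul_eq_zero {ι : Type*} [DecidableEq ι] {s : Finset ι}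
    (hs : s.Nonempty) {w f : ι → ℝ} {C : ℝ} (hw : ∀ i ∈ s, 0 < w i)
    (hf : ∀ i ∈ s, |f i| ≤ C)
    (h : ∑ i ∈ s, w i * f i = 0) : |∑ i ∈ s, f i| ≤ (#s - 1) * C := by
  have sum_le : ∀ g : ι → ℝ, (∀ i ∈ s, g i ≤ C) → ∑ i ∈ s, w i * g i = 0 →
      ∑ i ∈ s, g i ≤ (#s - 1) * C := by
    intro g hgC hg
    obtain ⟨i₀, hi₀, hgi₀⟩ : ∃ i ∈ s, g i ≤ 0 := by
      by_contra! hpos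
      exact (sum_pos (fun i hi => mul_pos (hw i hi) (hpos i hi)) hs).ne' hg
    have hrest : ∑ i ∈ s.erase i₀, g i ≤ #(s.erase i₀) • C :=
      sum_le_card_nsmul _ _ _ fun i hi => hgC i (mem_of_mem_erase hi)
    rw [card_erase_of_mem hi₀, nsmul_eq_mul, Nat.cast_sub (card_pos.mpr hs)] at hrest
    rw [← add_sum_erase s g hi₀]
    push_cast at hrest
    linarith
  refine abs_le.mpr ⟨?_, sum_le f (fun i hi => (le_abs_self _).trans (hf i hi)) h⟩
  have := sum_le (fun i => -f i) (fun i hi => (neg_le_abs _).trans (hf i hi))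
    (by simp only [mul_neg, sum_neg_distrib, h, neg_zero])
  rw [sum_neg_distrib] at this
  linarith

section WindowAverage

variable {x : ℕ → ℝ} {m : ℕ} (hrec : ∀ n, m * x (n + m) = ∑ j ∈ range m, x (n + j))
include hrec

theorem weighted_window_sum_eq (n : ℕ) :
    ∑ j ∈ range m, ((j : ℝ) + 1) * x (n + j) = ∑ j ∈ range m, ((j : ℝ) + 1) * x j := by
  induction n with
  | zero => simp
  | succ n ih =>
    rw [← ih]
    calc ∑ j ∈ range m, ((j : ℝ) + 1) * x (n + 1 + j)
        = ∑ j ∈ range (m + 1), (j : ℝ) * x (n + j) := by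
          rw [sum_range_succ']
          simp only [Nat.cast_add, Nat.cast_one, Nat.cast_zero, zero_mul, add_zero]
          exact sum_congr rfl fun j _ => by rw [add_right_comm, add_assoc]
      _ = ∑ j ∈ range m, ((j : ℝ) + 1) * x (n + j) := by
          rw [sum_range_succ, hrec, ← sum_add_distrib]
          exact sum_congr rfl fun j _ => by ring

variable (hm : 0 < m) (h₀ : ∑ j ∈ range m, ((j : ℝ) + 1) * x j = 0)
include hm h₀

theorem abs_le_of_window_le {n : ℕ} {C : ℝ} (hC : ∀ j < m, |x (n + j)| ≤ C) :
    |x (n + m)| ≤ (m - 1) / m * C := by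
  have hmR : (0 : ℝ) < m := by exact_mod_cast hm
  have h := abs_sum_le_of_sum_mul_eq_zero (nonempty_range_iff.mpr hm.ne')
    (w := fun j : ℕ => (j : ℝ) + 1) (fun j _ => by positivity)
    (fun j hj => hC j (mem_range.mp hj)) ((weighted_window_sum_eq hrec n).trans h₀)
  rw [← hrec, card_range, abs_mul, abs_of_pos hmR] at h
  rw [div_mul_eq_mul_div, le_div_iff₀ hmR]
  linarith

theorem next_window_abs_le {n : ℕ} {C : ℝ} (hC : ∀ j < m, |x (n + j)| ≤ C) :
    ∀ j < m, |x (n + m + j)| ≤ (m - 1) / m * C := by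
  have hC₀ : 0 ≤ C := (abs_nonneg _).trans (hC 0 hm)
  have hr : (m - 1) / m * C ≤ C := by
    have : ((m : ℝ) - 1) / m ≤ 1 := div_le_one_of_le₀ (by linarith) (by positivity)
    nlinarith
  intro j
  induction j using Nat.strong_induction_on with
  | _ j ih =>
    intro hj
    rw [add_right_comm]
    refine abs_le_of_window_le hrec hm h₀ fun i hi => ?_
    rcases lt_or_ge (j + i) m with h | h
    · rw [add_assoc]; exact hC _ h
    · have := ih (j + i - m) (by omega) (by omega)
      rw [show n + j + i = n + m + (j + i - m) by omega]
      exact this.trans hr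

theorem window_abs_le_pow (k : ℕ) :
    ∀ j < m, |x (k * m + j)| ≤ ((m - 1) / m) ^ k * ∑ i ∈ range m, |x i| := by
  induction k with
  | zero =>
    intro j hj
    simpa using single_le_sum (f := fun i => |x i|) (fun i _ => abs_nonneg _) (mem_range.mpr hj)
  | succ k ih =>
    intro j hj
    rw [add_mul, one_mul, pow_succ', mul_assoc]
    exact next_window_abs_le hrec hm h₀ ih j hj

theorem tendsto_zero_of_window_average : Tendsto x atTop (𝓝 0) := by
  set r : ℝ := (m - 1) / m
  have hr₀ : 0 ≤ r := div_nonneg (sub_nonneg.mpr (Nat.one_le_cast.mpr hm)) (Nat.cast_nonneg m)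
  have hr₁ : r < 1 := (div_lt_one (by exact_mod_cast hm)).mpr (by linarith)
  have hbound : ∀ n, |x n| ≤ r ^ (n / m) * ∑ i ∈ range m, |x i| := fun n => by
    simpa only [Nat.div_add_mod'] using
      window_abs_le_pow hrec hm h₀ (n / m) (n % m) (Nat.mod_lt n hm)
  have hlim : Tendsto (fun n => r ^ (n / m) * ∑ i ∈ range m, |x i|) atTop (𝓝 0) := by
    simpa using ((tendsto_pow_atTop_nhds_zero_of_lt_one hr₀ hr₁).comp
      (Nat.tendsto_div_const_atTop hm.ne')).mul_const (∑ i ∈ range m, |x i|)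
  exact squeeze_zero_norm hbound hlim

end WindowAverage

theorem sum_Icc_min_eq_sum_range_ite {M : Type*} [AddCommMonoid M] (f : ℕ → M) (m N : ℕ) :
    ∑ d ∈ Icc 1 (min N m), f (N - d) =
      ∑ j ∈ range m, if m ≤ N + j then f (N + j - m) else 0 := by
  rw [← sum_filter]
  refine sum_nbij' (fun d => m - d) (fun j => m - j) ?_ ?_ ?_ ?_ ?_ <;>
    intro a ha <;> simp only [mem_Icc, mem_filter, mem_range] at ha ⊢
    <;> first | omega | (congr 1; omega)

def padLeft (m : ℕ) (p : ℕ → ℝ) (k : ℕ) : ℝ := if m ≤ k + 1 then p (k + 1 - m) else 0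

theorem padLeft_add_sub_one (m : ℕ) (p : ℕ → ℝ) (n : ℕ) (hm : 0 < m) :
    padLeft m p (n + (m - 1)) = p n := by
  rw [padLeft, if_pos (by omega)]
  congr 1; omega

theorem padLeft_window_average {m : ℕ} {p : ℕ → ℝ}
    (hp : ∀ N, 1 ≤ N → m * p N = ∑ d ∈ Icc 1 (min N m), p (N - d)) (n : ℕ) :
    m * padLeft m p (n + m) = ∑ j ∈ range m, padLeft m p (n + j) := by
  rw [padLeft, if_pos (by omega), show n + m + 1 - m = n + 1 by omega, hp _ le_add_self,
    sum_Icc_min_eq_sum_range_ite]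
  simp only [padLeft, add_right_comm n 1]

theorem sum_range_mul_padLeft (m : ℕ) (p : ℕ → ℝ) :
    ∑ j ∈ range m, ((j : ℝ) + 1) * padLeft m p j = m * p 0 := by
  cases m with
  | zero => simp
  | succ m =>
    rw [sum_range_succ, sum_eq_zero fun j hj => by
      rw [padLeft, if_neg (by have := mem_range.mp hj; omega), mul_zero]]
    simp [padLeft]

theorem sum_range_cast_add_one (m : ℕ) :
    ∑ j ∈ range m, ((j : ℝ) + 1) = m * (m + 1) / 2 := by
  induction m with
  | zero => simp
  | succ m ih => rw [sum_range_succ, ih]; push_cast; ring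

theorem stmt_8 (b : ℕ) (hb : 2 ≤ b) (q : ℕ → ℚ) (hq0 : q 0 = 1)
    (hq : ∀ n, 1 ≤ n →
      q n = (1 / ((b : ℚ) - 1)) * ∑ d ∈ Finset.Icc 1 (min n (b - 1)), q (n - d)) :
    Filter.Tendsto (fun n => (q n : ℝ)) Filter.atTop (nhds (2 / (b : ℝ))) := by
  obtain ⟨m, rfl⟩ : ∃ m, b = m + 1 := ⟨b - 1, by omega⟩
  have hm : 0 < m := by omega
  set p : ℕ → ℝ := fun n => q n
  have hp : ∀ N, 1 ≤ N → m * p N = ∑ d ∈ Icc 1 (min N m), p (N - d) := fun N hN => by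
    have hmQ : (m : ℚ) ≠ 0 := by exact_mod_cast hm.ne'
    have h : (m : ℚ) * q N = ∑ d ∈ Icc 1 (min N m), q (N - d) := by
      rw [hq N hN]
      simp only [Nat.add_sub_cancel, Nat.cast_add, Nat.cast_one, add_sub_cancel_right]
      field_simp
    simp only [p]
    exact_mod_cast h
  set c : ℝ := 2 / (m + 1 : ℕ)
  set x : ℕ → ℝ := fun k => padLeft m p k - c
  have hrec : ∀ n, m * x (n + m) = ∑ j ∈ range m, x (n + j) := fun n => by
    simp only [x, sum_sub_distrib, mul_sub, padLeft_window_average hp, sum_const, card_range,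
      nsmul_eq_mul]
  have h₀ : ∑ j ∈ range m, ((j : ℝ) + 1) * x j = 0 := by
    simp only [x, mul_sub, sum_sub_distrib, ← sum_mul, sum_range_mul_padLeft,
      sum_range_cast_add_one, p, hq0, c]
    field_simp
    push_cast
    ring
  have hx := tendsto_zero_of_window_average hrec hm h₀
  rw [← tendsto_add_atTop_iff_nat (m - 1)] at hx
  simpa only [x, padLeft_add_sub_one m p _ hm, tendsto_sub_nhds_zero_iff] using hx
end

section
/- Let b ≥ 2 be an integer and define q : ℕ → ℚ by q(0) = 1 and, for n ≥ 1, q(n) = (1/(b-1)) · Σ_{d=1}^{min(n, b-1)} q(n-d). Then there exist constants C > 0 and α with 0 < α < 1 such that |q(n) - 2/b| ≤ C·α^n for all n ∈ ℕ. -/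
/-!
Put `B = b - 1`. From index `B` on, each term of `q` is the average of the `B` preceding ones.
For such a moving average the range `[m, M]` of a window of `B` consecutive terms can only shrink,
and `B` steps later it has shrunk by the factor `1 - 1 / (2 B^B)`: the first term of the window lies
in one half of `[m, M]`, and it enters each of the next `B` terms with weight at least `B^(-B)`.
The weighted sum `∑_{j<B} (j+1) q (n+j)` is invariant, and the truncated recurrence for the first
terms makes it equal to `B`, which puts `2 / (B + 1) = 2 / b` in the range of every window.
-/

open Finset

section MovingAverage

def IsMovingAverage {R : Type*} [Semiring R] (u : ℕ → R) (B : ℕ) : Prop :=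
  ∀ n, (B : R) * u (n + B) = ∑ i ∈ range B, u (n + i)

theorem IsMovingAverage.neg {R : Type*} [Ring R] {u : ℕ → R} {B : ℕ}
    (hu : IsMovingAverage u B) : IsMovingAverage (-u) B := fun n => by
  simp [hu n, sum_neg_distrib]

theorem IsMovingAverage.mul_sub_eq_sum {R : Type*} [Ring R] {u : ℕ → R} {B : ℕ}
    (hu : IsMovingAverage u B) (n : ℕ) (c : R) :
    (B : R) * (u (n + B) - c) = ∑ i ∈ range B, (u (n + i) - c) := by
  rw [mul_sub, hu n, sum_sub_distrib, sum_const, card_range, nsmul_eq_mul]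

theorem IsMovingAverage.weightedSum_succ {R : Type*} [Semiring R] {u : ℕ → R} {B : ℕ}
    (hu : IsMovingAverage u B) (n : ℕ) :
    ∑ j ∈ range B, ((j : R) + 1) * u (n + 1 + j) = ∑ j ∈ range B, ((j : R) + 1) * u (n + j) := by
  have hshift : ∑ j ∈ range B, ((j : R) + 1) * u (n + 1 + j)
      = ∑ j ∈ range (B + 1), (j : R) * u (n + j) := by
    rw [sum_range_succ']
    simp only [Nat.cast_add, Nat.cast_one, Nat.cast_zero, zero_mul, add_zero]
    exact sum_congr rfl fun j _ => by rw [add_right_comm, add_assoc]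
  rw [hshift, sum_range_succ, hu n, ← sum_add_distrib]
  exact sum_congr rfl fun j _ => by rw [add_mul, one_mul]

theorem IsMovingAverage.weightedSum_eq {R : Type*} [Semiring R] {u : ℕ → R} {B : ℕ}
    (hu : IsMovingAverage u B) (n : ℕ) :
    ∑ j ∈ range B, ((j : R) + 1) * u (n + j) = ∑ j ∈ range B, ((j : R) + 1) * u j := by
  induction n with
  | zero => simp
  | succ n ih => rw [hu.weightedSum_succ, ih]

theorem weightedSum_eq_of_initial {R : Type*} [CommRing R] {u : ℕ → R} {B : ℕ} (h0 : u 0 = 1)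
    (h : ∀ j, 1 ≤ j → j < B → (B : R) * u j = ∑ k ∈ range j, u k) :
    ∑ j ∈ range B, ((j : R) + 1) * u j = B := by
  rcases Nat.eq_zero_or_pos B with rfl | hB
  · simp
  -- at `j = 1` this sum is `B * u 0`, at `j = B` it is the weighted sum; the recurrence keeps it fixed
  suffices H : ∀ j, 1 ≤ j → j ≤ B → ∑ k ∈ range j, ((k : R) + 1 + B - j) * u k = B by
    simpa using H B hB le_rfl
  intro j hj
  induction j, hj using Nat.le_induction with
  | base => intro _; simp [h0]
  | succ j hj ih =>
    intro hjB
    have hsplit : ∑ k ∈ range j, ((k : R) + 1 + B - (j + 1 : ℕ)) * u k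
        = ∑ k ∈ range j, ((k : R) + 1 + B - j) * u k - ∑ k ∈ range j, u k := by
      rw [← sum_sub_distrib]
      exact sum_congr rfl fun k _ => by push_cast; ring
    rw [sum_range_succ, hsplit, ih (by omega), ← h j hj (by omega)]
    push_cast
    ring

variable {K : Type*} [Field K] [LinearOrder K] [IsStrictOrderedRing K] {u : ℕ → K} {B : ℕ}

def WindowBounded (u : ℕ → K) (B n : ℕ) (m M : K) : Prop :=
  ∀ i < B, u (n + i) ∈ Set.Icc m M

theorem WindowBounded.neg {n : ℕ} {m M : K} (h : WindowBounded u B n m M) :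
    WindowBounded (-u) B n (-M) (-m) := fun i hi => by
  simpa [and_comm] using h i hi

theorem exists_windowBounded (u : ℕ → K) (B n : ℕ) : ∃ m M, WindowBounded u B n m M := by
  refine ⟨-∑ i ∈ range B, |u (n + i)|, ∑ i ∈ range B, |u (n + i)|, fun i hi => ?_⟩
  rw [Set.mem_Icc, ← abs_le]
  exact single_le_sum (f := fun i => |u (n + i)|) (fun _ _ => abs_nonneg _) (mem_range.mpr hi)

theorem IsMovingAverage.windowBounded_succ (hu : IsMovingAverage u B) (hB : 0 < B) {n : ℕ}
    {m M : K} (h : WindowBounded u B n m M) : WindowBounded u B (n + 1) m M := by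
  intro i hi
  rcases lt_or_eq_of_le (Nat.le_sub_one_of_lt hi) with hi' | rfl
  · simpa [add_assoc, add_comm 1 i] using h (i + 1) (by omega)
  have hB' : (0 : K) < B := by exact_mod_cast hB
  have hlow := hu.mul_sub_eq_sum n m
  have hupp := hu.mul_sub_eq_sum n M
  rw [show n + 1 + (B - 1) = n + B by omega]
  constructor
  · have : 0 ≤ ∑ i ∈ range B, (u (n + i) - m) :=
      sum_nonneg fun i hi => sub_nonneg.mpr (h i (mem_range.mp hi)).1
    nlinarith
  · have : ∑ i ∈ range B, (u (n + i) - M) ≤ 0 :=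
      sum_nonpos fun i hi => sub_nonpos.mpr (h i (mem_range.mp hi)).2
    nlinarith

theorem IsMovingAverage.windowBounded_add (hu : IsMovingAverage u B) (hB : 0 < B) {n : ℕ}
    {m M : K} (h : WindowBounded u B n m M) (k : ℕ) : WindowBounded u B (n + k) m M := by
  induction k with
  | zero => exact h
  | succ k ih => exact hu.windowBounded_succ hB ih

theorem IsMovingAverage.mem_Icc_of_windowBounded (hu : IsMovingAverage u B) (hB : 0 < B)
    {n : ℕ} {m M : K} (h : WindowBounded u B n m M) {k : ℕ} (hk : n ≤ k) : u k ∈ Set.Icc m M := by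
  simpa [Nat.add_sub_cancel' hk] using hu.windowBounded_add hB h (k - n) 0 hB

theorem IsMovingAverage.sub_le_mul_sub (hu : IsMovingAverage u B) {n j : ℕ} {m : K}
    (hm : ∀ i < B, m ≤ u (n + i)) (hj : j < B) : u (n + j) - m ≤ B * (u (n + B) - m) := by
  rw [hu.mul_sub_eq_sum]
  exact single_le_sum (f := fun i => u (n + i) - m)
    (fun i hi => sub_nonneg.mpr (hm i (mem_range.mp hi))) (mem_range.mpr hj)

theorem IsMovingAverage.sub_le_pow_mul_sub (hu : IsMovingAverage u B) (hB : 0 < B) {n : ℕ}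
    {m M : K} (h : WindowBounded u B n m M) (t : ℕ) :
    u n - m ≤ B ^ (t + 1) * (u (n + B + t) - m) := by
  induction t with
  | zero => simpa using hu.sub_le_mul_sub (fun i hi => (h i hi).1) hB
  | succ t ih =>
    have hstep : u (n + B + t) - m ≤ B * (u (n + B + (t + 1)) - m) := by
      have := hu.sub_le_mul_sub (n := n + (t + 1)) (j := B - 1)
        (fun i _ => (hu.mem_Icc_of_windowBounded hB h (by omega)).1) (by omega)
      rwa [show n + (t + 1) + (B - 1) = n + B + t by omega,
        show n + (t + 1) + B = n + B + (t + 1) by omega] at this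
    calc u n - m ≤ B ^ (t + 1) * (u (n + B + t) - m) := ih
      _ ≤ B ^ (t + 1) * (B * (u (n + B + (t + 1)) - m)) :=
        mul_le_mul_of_nonneg_left hstep (by positivity)
      _ = B ^ (t + 1 + 1) * (u (n + B + (t + 1)) - m) := by ring

theorem IsMovingAverage.windowBounded_add_of_mid_le (hu : IsMovingAverage u B) (hB : 0 < B)
    {n : ℕ} {m M : K} (h : WindowBounded u B n m M) (hmid : (m + M) / 2 ≤ u n) :
    WindowBounded u B (n + B) (m + (M - m) / (2 * B ^ B)) M := by
  intro i hi
  have hmem := hu.mem_Icc_of_windowBounded hB h (k := n + B + i) (by omega)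
  refine ⟨?_, hmem.2⟩
  have hpow : (B : K) ^ (i + 1) ≤ B ^ B := pow_le_pow_right₀ (by exact_mod_cast hB) hi
  have hgain : (M - m) / 2 ≤ B ^ B * (u (n + B + i) - m) :=
    calc (M - m) / 2 ≤ u n - m := by linarith
      _ ≤ B ^ (i + 1) * (u (n + B + i) - m) := hu.sub_le_pow_mul_sub hB h i
      _ ≤ B ^ B * (u (n + B + i) - m) := mul_le_mul_of_nonneg_right hpow (sub_nonneg.mpr hmem.1)
  have : (M - m) / (2 * B ^ B) ≤ u (n + B + i) - m := by
    rw [div_le_iff₀ (by positivity)]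
    linarith
  linarith

theorem IsMovingAverage.exists_windowBounded_contract (hu : IsMovingAverage u B) (hB : 0 < B)
    {n : ℕ} {m M : K} (h : WindowBounded u B n m M) :
    ∃ m' M', WindowBounded u B (n + B) m' M' ∧ M' - m' = (1 - 1 / (2 * B ^ B)) * (M - m) := by
  have hP : (B : K) ^ B ≠ 0 := pow_ne_zero _ (by exact_mod_cast hB.ne')
  rcases le_total ((m + M) / 2) (u n) with hmid | hmid
  · exact ⟨_, _, hu.windowBounded_add_of_mid_le hB h hmid, by field_simp; ring⟩
  · have hneg := (hu.neg.windowBounded_add_of_mid_le hB h.neg (by simp; linarith)).neg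
    rw [neg_neg] at hneg
    exact ⟨_, _, hneg, by field_simp; ring⟩

theorem IsMovingAverage.exists_windowBounded_mul (hu : IsMovingAverage u B) (hB : 0 < B)
    {m M : K} (h : WindowBounded u B 0 m M) (t : ℕ) :
    ∃ m' M', WindowBounded u B (t * B) m' M' ∧ M' - m' = (1 - 1 / (2 * B ^ B)) ^ t * (M - m) := by
  induction t with
  | zero => exact ⟨m, M, by simpa using h, by simp⟩
  | succ t ih =>
    obtain ⟨m', M', h', hw⟩ := ih
    obtain ⟨m'', M'', h'', hw'⟩ := hu.exists_windowBounded_contract hB h'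
    exact ⟨m'', M'', by rwa [Nat.succ_mul], by rw [hw', hw, pow_succ]; ring⟩

theorem sum_range_natCast_add_one (B : ℕ) : ∑ j ∈ range B, ((j : K) + 1) = B * (B + 1) / 2 := by
  induction B with
  | zero => simp
  | succ B ih => rw [sum_range_succ, ih]; push_cast; ring

theorem WindowBounded.two_div_mem_Icc (hB : 0 < B) {n : ℕ} {m M : K}
    (h : WindowBounded u B n m M) (hW : ∑ j ∈ range B, ((j : K) + 1) * u (n + j) = B) :
    (2 / (B + 1) : K) ∈ Set.Icc m M := by
  have hB' : (0 : K) < B := by exact_mod_cast hB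
  have hS := sum_range_natCast_add_one (K := K) B
  have hlow : (B : K) * (B + 1) / 2 * m ≤ B := by
    rw [← hS, ← hW, sum_mul]
    exact sum_le_sum fun j hj => mul_le_mul_of_nonneg_left (h j (mem_range.mp hj)).1 (by positivity)
  have hupp : (B : K) ≤ B * (B + 1) / 2 * M := by
    rw [← hS, ← hW, sum_mul]
    exact sum_le_sum fun j hj => mul_le_mul_of_nonneg_left (h j (mem_range.mp hj)).2 (by positivity)
  constructor
  · rw [le_div_iff₀ (by positivity)]
    nlinarith
  · rw [div_le_iff₀ (by positivity)]
    nlinarith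

theorem IsMovingAverage.abs_sub_two_div_le (hu : IsMovingAverage u B) (hB : 0 < B)
    (hW : ∑ j ∈ range B, ((j : K) + 1) * u j = B) {m M : K} (h : WindowBounded u B 0 m M)
    (k : ℕ) : |u k - 2 / (B + 1)| ≤ (M - m) * (1 - 1 / (2 * B ^ B)) ^ (k / B) := by
  obtain ⟨m', M', h', hw⟩ := hu.exists_windowBounded_mul hB h (k / B)
  have hk := hu.mem_Icc_of_windowBounded hB h' (Nat.div_mul_le_self k B)
  have hL := h'.two_div_mem_Icc hB ((hu.weightedSum_eq _).trans hW)
  calc |u k - 2 / (B + 1)| ≤ M' - m' := abs_sub_le_of_le_of_le hk.1 hk.2 hL.1 hL.2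
    _ = (M - m) * (1 - 1 / (2 * B ^ B)) ^ (k / B) := by rw [hw, mul_comm]

end MovingAverage

theorem exists_pow_bound_of_le_mul_pow_div {f : ℕ → ℝ} {D ρ : ℝ} {B : ℕ} (hB : 0 < B)
    (hD : 0 ≤ D) (hρ0 : 0 < ρ) (hρ1 : ρ < 1) (hf : ∀ k, f k ≤ D * ρ ^ (k / B)) :
    ∃ C : ℝ, 0 < C ∧ ∃ α : ℝ, 0 < α ∧ α < 1 ∧ ∀ k, f k ≤ C * α ^ k := by
  set α := ρ ^ ((B : ℝ)⁻¹)
  have hα0 : 0 < α := Real.rpow_pos_of_pos hρ0 _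
  have hα1 : α < 1 := Real.rpow_lt_one hρ0.le hρ1 (by positivity)
  have hαB : α ^ B = ρ := Real.rpow_inv_natCast_pow hρ0.le hB.ne'
  refine ⟨(D + 1) / ρ, by positivity, α, hα0, hα1, fun k => ?_⟩
  have hblock : ρ ^ (k / B) * ρ ≤ α ^ k := by
    rw [← pow_succ, ← hαB, ← pow_mul]
    exact pow_le_pow_of_le_one hα0.le hα1.le (Nat.lt_mul_div_succ k hB).le
  calc f k ≤ D * ρ ^ (k / B) := hf k
    _ ≤ (D + 1) * ρ ^ (k / B) := by gcongr; linarith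
    _ ≤ (D + 1) * (α ^ k / ρ) := by gcongr; rwa [le_div_iff₀ hρ0]
    _ = (D + 1) / ρ * α ^ k := by ring

theorem sum_Icc_one_sub_eq {M : Type*} [AddCommMonoid M] (f : ℕ → M) {m n : ℕ} (h : m ≤ n) :
    ∑ d ∈ Icc 1 m, f (n - d) = ∑ i ∈ range m, f (n - m + i) := by
  refine sum_nbij' (fun d => m - d) (fun i => m - i) ?_ ?_ ?_ ?_ ?_ <;> intro a ha <;>
    simp only [mem_Icc, mem_range] at ha ⊢
  all_goals first | omega | (congr 1; omega)

theorem stmt_9 (b : ℕ) (hb : 2 ≤ b) (q : ℕ → ℚ) (hq0 : q 0 = 1)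
    (hq : ∀ n, 1 ≤ n →
      q n = (1 / ((b : ℚ) - 1)) * ∑ d ∈ Finset.Icc 1 (min n (b - 1)), q (n - d)) :
    ∃ C : ℝ, 0 < C ∧ ∃ α : ℝ, 0 < α ∧ α < 1 ∧
      ∀ n, |(q n : ℝ) - 2 / (b : ℝ)| ≤ C * α ^ n := by
  obtain ⟨B, rfl⟩ : ∃ B, b = B + 1 := ⟨b - 1, by omega⟩
  have hB : 0 < B := by omega
  set u : ℕ → ℝ := fun n => (q n : ℝ)
  have hrec : ∀ n, 1 ≤ n → (B : ℝ) * u n = ∑ i ∈ range (min n B), u (n - min n B + i) := by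
    intro n hn
    rw [← sum_Icc_one_sub_eq _ (min_le_left n B)]
    have := congrArg (Rat.cast (K := ℝ)) (hq n hn)
    push_cast at this
    simp only [add_sub_cancel_right] at this
    change (B : ℝ) * (q n : ℝ) = ∑ d ∈ Icc 1 (min n B), (q (n - d) : ℝ)
    rw [this]
    field_simp
  have hu : IsMovingAverage u B := fun n => by
    simpa using hrec (n + B) (by omega)
  have hW : ∑ j ∈ range B, ((j : ℝ) + 1) * u j = B :=
    weightedSum_eq_of_initial (by simp [u, hq0]) fun j hj1 hjB => by
      simpa [min_eq_left hjB.le] using hrec j hj1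
  obtain ⟨m, M, h0⟩ := exists_windowBounded u B 0
  have hBB : (1 : ℝ) ≤ B ^ B := one_le_pow₀ (by exact_mod_cast hB)
  refine exists_pow_bound_of_le_mul_pow_div (ρ := 1 - 1 / (2 * B ^ B)) hB
    (sub_nonneg.mpr ((h0 0 hB).1.trans (h0 0 hB).2))
    (sub_pos.mpr ((div_lt_one (by positivity)).mpr (by linarith)))
    (sub_lt_self _ (by positivity)) fun k => ?_
  simpa using hu.abs_sub_two_div_le hB hW h0 k
end

section
/- Define q : ℕ → ℚ by q(0) = 1 and, for n ≥ 1, q(n) = (1/9) · Σ_{d=1}^{min(n, 9)} q(n-d). Then |q(666) - 1/5| < 10^{-60}. -/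
/-!
Extending `q` by zero to negative indices turns the truncated sum into the full recurrence
`m q(k+1) = q k + q (k-1) + ⋯ + q (k-m+1)`, valid for every `k ≥ 0`. The window of the last `m`
values, multiplied by `m ^ k`, consists of natural numbers and evolves by an explicit integer
step, so `q 666 = N / 9 ^ 666` for a natural number `N` that the kernel computes; the required
inequality is then a decidable statement about integers. (The limit `1/5` is the reciprocal of
the mean step `(1 + ⋯ + 9) / 9 = 5`, but no rate of convergence is needed.)
-/

open Finset

def windowStep (m : ℕ) (w : List ℕ) : List ℕ := w.sum :: w.dropLast.map (m * ·)

def window (m k : ℕ) : List ℕ := (windowStep m)^[k] (1 :: List.replicate (m - 1) 0)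

def extendByZero (q : ℕ → ℚ) (n : ℤ) : ℚ := if 0 ≤ n then q n.toNat else 0

lemma extendByZero_natCast (q : ℕ → ℚ) (n : ℕ) : extendByZero q n = q n := by
  simp [extendByZero]

lemma sum_Icc_one_sub_eq_sum_range (f : ℕ → ℚ) (n k : ℕ) :
    ∑ d ∈ Icc 1 n, f (k + 1 - d) = ∑ i ∈ range n, f (k - i) := by
  rw [← Ico_add_one_right_eq_Icc, sum_Ico_eq_sum_range]
  exact sum_congr rfl fun i _ ↦ by rw [add_comm 1 i, Nat.add_sub_add_right]

lemma extendByZero_natCast_sub {q : ℕ → ℚ} {k i : ℕ} (hik : i ≤ k) :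
    extendByZero q (k - i) = q (k - i) := by
  simp [extendByZero, hik]

lemma extendByZero_natCast_sub_of_lt (q : ℕ → ℚ) {k i : ℕ} (hki : k < i) :
    extendByZero q (k - i) = 0 := by
  simp [extendByZero, hki]

lemma sum_range_extendByZero (q : ℕ → ℚ) (m k : ℕ) :
    ∑ i ∈ range m, extendByZero q (k - i) = ∑ d ∈ Icc 1 (min (k + 1) m), q (k + 1 - d) := by
  rw [sum_Icc_one_sub_eq_sum_range]
  calc ∑ i ∈ range m, extendByZero q (k - i)
      = ∑ i ∈ range (min (k + 1) m), extendByZero q (k - i) := by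
        refine (sum_subset (range_subset_range.mpr (min_le_right _ _)) fun i hi hi' ↦ ?_).symm
        simp only [mem_range] at hi hi'
        exact extendByZero_natCast_sub_of_lt q (by omega)
    _ = ∑ i ∈ range (min (k + 1) m), q (k - i) :=
        sum_congr rfl fun i hi ↦ extendByZero_natCast_sub (by rw [mem_range] at hi; omega)

lemma sum_range_extendByZero_eq {m : ℕ} {q : ℕ → ℚ} (hm : 0 < m)
    (hq : ∀ n, 1 ≤ n → q n = (1 / (m : ℚ)) * ∑ d ∈ Icc 1 (min n m), q (n - d)) (k : ℕ) :
    ∑ i ∈ range m, extendByZero q (k - i) = m * q (k + 1) := by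
  rw [sum_range_extendByZero, hq (k + 1) (by omega)]
  field_simp

lemma map_cast_windowStep (m : ℕ) (w : List ℕ) :
    (windowStep m w).map (Nat.cast : ℕ → ℚ) =
      (w.map Nat.cast).sum :: ((w.map Nat.cast).dropLast.map ((m : ℚ) * ·)) := by
  simp [windowStep, List.map_dropLast, Function.comp_def]

lemma map_cast_window {m : ℕ} {q : ℕ → ℚ} (hm : 0 < m) (hq0 : q 0 = 1)
    (hq : ∀ n, 1 ≤ n → q n = (1 / (m : ℚ)) * ∑ d ∈ Icc 1 (min n m), q (n - d)) (k : ℕ) :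
    (window m k).map (Nat.cast : ℕ → ℚ) =
      (List.range m).map fun i : ℕ ↦ (m : ℚ) ^ k * extendByZero q (k - i) := by
  induction k with
  | zero =>
    obtain ⟨m, rfl⟩ : ∃ m', m = m' + 1 := ⟨m - 1, by omega⟩
    simp [window, List.range_succ_eq_map, extendByZero, hq0, Function.comp_def, List.map_const']
  | succ k ih =>
    rw [window, Function.iterate_succ_apply', ← window, map_cast_windowStep, ih]
    obtain ⟨m, rfl⟩ : ∃ m', m = m' + 1 := ⟨m - 1, by omega⟩
    conv_rhs => rw [List.range_succ_eq_map, List.map_cons, List.map_map]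
    congr 1
    · rw [← List.sum_toFinset _ List.nodup_range, List.toFinset_range, ← mul_sum,
        sum_range_extendByZero_eq hm hq, Nat.cast_zero, sub_zero, extendByZero_natCast]
      ring
    · rw [List.range_succ, List.map_append, List.map_singleton, List.dropLast_concat, List.map_map]
      refine List.map_congr_left fun i _ ↦ ?_
      simp only [Function.comp_apply, Nat.succ_eq_add_one, Nat.cast_add, Nat.cast_one,
        add_sub_add_right_eq_sub, pow_succ]
      ring

lemma eq_headD_window_div {m : ℕ} {q : ℕ → ℚ} (hm : 0 < m) (hq0 : q 0 = 1)
    (hq : ∀ n, 1 ≤ n → q n = (1 / (m : ℚ)) * ∑ d ∈ Icc 1 (min n m), q (n - d)) (k : ℕ) :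
    q k = ((window m k).headD 0 : ℚ) / (m ^ k : ℕ) := by
  have h := congrArg (List.headD · 0) (map_cast_window hm hq0 hq k)
  have map_cast_headD (l : List ℕ) : (l.map (Nat.cast : ℕ → ℚ)).headD 0 = (l.headD 0 : ℕ) := by
    cases l <;> rfl
  obtain ⟨m, rfl⟩ : ∃ m', m = m' + 1 := ⟨m - 1, by omega⟩
  simp only [map_cast_headD, List.range_succ_eq_map, List.map_cons, List.headD_cons,
    Nat.cast_zero, sub_zero, extendByZero_natCast] at h
  rw [h, Nat.cast_pow, mul_div_cancel_left₀ _ (by positivity)]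

lemma abs_div_sub_one_div_lt {N D b e : ℕ} (hD : 0 < D) (hb : 0 < b)
    (h : |(b * N : ℤ) - D| * 10 ^ e < b * D) : |(N : ℚ) / D - 1 / b| < (1 / 10) ^ e := by
  have hbD : (0 : ℚ) < b * D := by positivity
  rw [div_sub_div _ _ (by positivity) (by positivity), abs_div, mul_comm (D : ℚ) b, abs_of_pos hbD,
    div_lt_iff₀ hbD, one_div_pow, one_div_mul_eq_div, lt_div_iff₀ (by positivity), mul_one,
    mul_comm (N : ℚ)]
  exact_mod_cast h

theorem stmt_10 (q : ℕ → ℚ) (hq0 : q 0 = 1)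
    (hq : ∀ n, 1 ≤ n →
      q n = (1 / (9 : ℚ)) * ∑ d ∈ Finset.Icc 1 (min n 9), q (n - d)) :
    |q 666 - 1 / 5| < (1 / 10) ^ 60 := by
  have hq9 : ∀ n, 1 ≤ n → q n = (1 / ((9 : ℕ) : ℚ)) * ∑ d ∈ Icc 1 (min n 9), q (n - d) := by
    exact_mod_cast hq
  rw [eq_headD_window_div (by norm_num) hq0 hq9 666, show (1 / 5 : ℚ) = 1 / (5 : ℕ) by norm_num]
  -- only the kernel, with its GMP-backed `Nat` arithmetic, evaluates `window 9 666` quickly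
  exact abs_div_sub_one_div_lt (by positivity) (by norm_num) (by decide +kernel)
end
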